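/- Let γ₁, γ₂ > 0 with γ₁ ≠ γ₂. For every μ ∈ (0, 1), γ₁ · μ(1 − μ) · (log(γ₁/γ₂))² / (1 + (γ₁ − 1)μ)² ≤ c₁ · D(f(μ, γ₁) ‖ f(μ, γ₂)), where c₁ = [γ₁ (log(γ₁/γ₂))² / min{1, γ₁}²] · [max{(γ₁ + γ₂)/2, 1}² / (√γ₁ − √γ₂)²]. That is, the conditional variance of the single-step log-likelihood-ratio increment is at most c₁ times its conditional expectation. -/

import Mathlib

/-!
Kullback–Leibler divergence dominates twice the Hellinger gap, `D(p‖q) ≥ 2 (1 - BC(p, q))` with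
`BC` the Bhattacharyya coefficient (apply `log x ≥ 1 - 1/x` to `√(p/q)` and `√((1-p)/(1-q))`),
and `2 (1 - BC) ≥ 1 - BC²`. For `p = f(μ, γ₁)`, `q = f(μ, γ₂)` and `dᵢ = 1 + (γᵢ - 1) μ` one has
`1 - BC² = μ (1 - μ) (√γ₁ - √γ₂)² / (d₁ d₂)`, so the claim reduces to
`min{1, γ₁}² d₂ ≤ max{(γ₁ + γ₂)/2, 1}² d₁`. This holds because `dᵢ` is a convex combination of
`1` and `γᵢ`, and `min{1, γ₁} · max{1, γ₂} ≤ max{(γ₁ + γ₂)/2, 1}²` by AM–GM.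
-/

/-- The declaration probability function `f(μ, γ) = γμ/(1 + (γ − 1)μ)`. -/
noncomputable def declProb (μ γ : ℝ) : ℝ := γ * μ / (1 + (γ - 1) * μ)

/-- Kullback–Leibler divergence between `Bernoulli(p)` and `Bernoulli(q)`. -/
noncomputable def klBernoulli (p q : ℝ) : ℝ :=
  p * Real.log (p / q) + (1 - p) * Real.log ((1 - p) / (1 - q))

open Real

theorem two_mul_sub_sqrt_mul_le_mul_log_div {a b : ℝ} (ha : 0 < a) (hb : 0 < b) :
    2 * (a - √(a * b)) ≤ a * log (a / b) := by
  have hx := sqrt_pos.2 ha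
  have hy := sqrt_pos.2 hb
  have hlog : log (a / b) = 2 * log (√a / √b) := by
    rw [log_div hx.ne' hy.ne', log_sqrt ha.le, log_sqrt hb.le, log_div ha.ne' hb.ne']
    ring
  have h := one_sub_inv_le_log_of_pos (div_pos hx hy)
  rw [inv_div] at h
  rw [hlog, sqrt_mul ha.le]
  calc 2 * (a - √a * √b) = a * (2 * (1 - √b / √a)) := by
        field_simp; linear_combination (-√b) * sq_sqrt ha.le
    _ ≤ a * (2 * log (√a / √b)) := by gcongr

noncomputable def bhattacharyyaBernoulli (p q : ℝ) : ℝ := √(p * q) + √((1 - p) * (1 - q))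

theorem two_mul_one_sub_bhattacharyyaBernoulli_le_klBernoulli {p q : ℝ}
    (hp : p ∈ Set.Ioo 0 1) (hq : q ∈ Set.Ioo 0 1) :
    2 * (1 - bhattacharyyaBernoulli p q) ≤ klBernoulli p q := by
  have h₁ := two_mul_sub_sqrt_mul_le_mul_log_div hp.1 hq.1
  have h₂ := two_mul_sub_sqrt_mul_le_mul_log_div (sub_pos.2 hp.2) (sub_pos.2 hq.2)
  unfold bhattacharyyaBernoulli klBernoulli
  linarith

section declProb

variable {μ γ γ₁ γ₂ : ℝ}

theorem min_one_le_one_add_sub_one_mul (hμ : μ ∈ Set.Icc 0 1) :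
    min 1 γ ≤ 1 + (γ - 1) * μ := by
  rcases le_total 1 γ with h | h
  · rw [min_eq_left h]; nlinarith [hμ.1]
  · rw [min_eq_right h]; nlinarith [hμ.2]

theorem one_add_sub_one_mul_le_max_one (hμ : μ ∈ Set.Icc 0 1) :
    1 + (γ - 1) * μ ≤ max 1 γ := by
  rcases le_total 1 γ with h | h
  · rw [max_eq_right h]; nlinarith [hμ.2]
  · rw [max_eq_left h]; nlinarith [hμ.1]

theorem one_add_sub_one_mul_pos (hγ : 0 < γ) (hμ : μ ∈ Set.Icc 0 1) :
    0 < 1 + (γ - 1) * μ :=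
  (lt_min one_pos hγ).trans_le (min_one_le_one_add_sub_one_mul hμ)

theorem one_sub_declProb (hγ : 0 < γ) (hμ : μ ∈ Set.Icc 0 1) :
    1 - declProb μ γ = (1 - μ) / (1 + (γ - 1) * μ) := by
  rw [declProb, one_sub_div (one_add_sub_one_mul_pos hγ hμ).ne']
  ring

theorem declProb_mem_Ioo (hγ : 0 < γ) (hμ : μ ∈ Set.Ioo 0 1) : declProb μ γ ∈ Set.Ioo 0 1 := by
  have hd := one_add_sub_one_mul_pos hγ (Set.Ioo_subset_Icc_self hμ)
  refine ⟨div_pos (mul_pos hγ hμ.1) hd, ?_⟩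
  rw [← sub_pos, one_sub_declProb hγ (Set.Ioo_subset_Icc_self hμ)]
  exact div_pos (sub_pos.2 hμ.2) hd

theorem one_sub_bhattacharyyaBernoulli_declProb_sq (hγ₁ : 0 < γ₁) (hγ₂ : 0 < γ₂)
    (hμ : μ ∈ Set.Icc 0 1) :
    1 - bhattacharyyaBernoulli (declProb μ γ₁) (declProb μ γ₂) ^ 2
      = μ * (1 - μ) * (√γ₁ - √γ₂) ^ 2 / ((1 + (γ₁ - 1) * μ) * (1 + (γ₂ - 1) * μ)) := by
  have hd₁ := one_add_sub_one_mul_pos hγ₁ hμ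
  have hd₂ := one_add_sub_one_mul_pos hγ₂ hμ
  rw [bhattacharyyaBernoulli, one_sub_declProb hγ₁ hμ, one_sub_declProb hγ₂ hμ, declProb, declProb]
  generalize hd₁def : 1 + (γ₁ - 1) * μ = d₁ at *
  generalize hd₂def : 1 + (γ₂ - 1) * μ = d₂ at *
  have hs := sqrt_pos.2 (mul_pos hd₁ hd₂)
  have h₁ : γ₁ * μ / d₁ * (γ₂ * μ / d₂) = (μ * (√γ₁ * √γ₂) / √(d₁ * d₂)) ^ 2 := by
    rw [div_pow, sq_sqrt (mul_pos hd₁ hd₂).le, mul_pow, mul_pow, sq_sqrt hγ₁.le, sq_sqrt hγ₂.le]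
    field_simp
  have h₂ : (1 - μ) / d₁ * ((1 - μ) / d₂) = ((1 - μ) / √(d₁ * d₂)) ^ 2 := by
    rw [div_pow, sq_sqrt (mul_pos hd₁ hd₂).le]
    field_simp
  rw [h₁, h₂, sqrt_sq (by have := hμ.1; positivity),
    sqrt_sq (div_nonneg (sub_nonneg.2 hμ.2) hs.le), ← add_div, div_pow, sq_sqrt (mul_pos hd₁ hd₂).le]
  field_simp
  subst hd₁def hd₂def
  nth_rewrite 1 [← sq_sqrt hγ₁.le, ← sq_sqrt hγ₂.le]
  ring

theorem le_klBernoulli_declProb (hγ₁ : 0 < γ₁) (hγ₂ : 0 < γ₂) (hμ : μ ∈ Set.Ioo 0 1) :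
    μ * (1 - μ) * (√γ₁ - √γ₂) ^ 2 / ((1 + (γ₁ - 1) * μ) * (1 + (γ₂ - 1) * μ))
      ≤ klBernoulli (declProb μ γ₁) (declProb μ γ₂) := by
  rw [← one_sub_bhattacharyyaBernoulli_declProb_sq hγ₁ hγ₂ (Set.Ioo_subset_Icc_self hμ)]
  refine le_trans ?_ (two_mul_one_sub_bhattacharyyaBernoulli_le_klBernoulli
    (declProb_mem_Ioo hγ₁ hμ) (declProb_mem_Ioo hγ₂ hμ))
  nlinarith [sq_nonneg (1 - bhattacharyyaBernoulli (declProb μ γ₁) (declProb μ γ₂))]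

end declProb

theorem min_one_mul_max_one_le_max_sq (a b : ℝ) :
    min 1 a * max 1 b ≤ max ((a + b) / 2) 1 ^ 2 := by
  have hab : min 1 a + max 1 b ≤ 2 * max ((a + b) / 2) 1 := by
    rcases le_total 1 b with h | h
    · linarith [min_le_right 1 a, max_eq_right h, le_max_left ((a + b) / 2) 1]
    · linarith [min_le_left 1 a, max_eq_left h, le_max_right ((a + b) / 2) 1]
  have hy : 1 ≤ max 1 b := le_max_left 1 b
  rcases le_total 0 (min 1 a + max 1 b) with h | h
  · nlinarith [four_mul_le_sq_add (min 1 a) (max 1 b)]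
  · nlinarith

theorem min_one_sq_mul_le_max_sq_mul {γ₁ γ₂ μ : ℝ} (hγ₁ : 0 < γ₁) (hμ : μ ∈ Set.Icc 0 1) :
    min 1 γ₁ ^ 2 * (1 + (γ₂ - 1) * μ) ≤ max ((γ₁ + γ₂) / 2) 1 ^ 2 * (1 + (γ₁ - 1) * μ) := by
  have hm : 0 < min 1 γ₁ := lt_min one_pos hγ₁
  calc min 1 γ₁ ^ 2 * (1 + (γ₂ - 1) * μ)
      ≤ min 1 γ₁ * (min 1 γ₁ * max 1 γ₂) := by
        rw [sq, mul_assoc]; gcongr; exact one_add_sub_one_mul_le_max_one hμ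
    _ ≤ (1 + (γ₁ - 1) * μ) * max ((γ₁ + γ₂) / 2) 1 ^ 2 := by
        have hd := min_one_le_one_add_sub_one_mul (γ := γ₁) hμ
        exact mul_le_mul hd (min_one_mul_max_one_le_max_sq γ₁ γ₂) (by positivity) (hm.le.trans hd)
    _ = _ := mul_comm _ _

/-- Let `γ₁, γ₂ > 0` with `γ₁ ≠ γ₂`. For every `μ ∈ (0, 1)`,
`γ₁·μ(1−μ)·(log(γ₁/γ₂))²/(1 + (γ₁−1)μ)² ≤ c₁·D(f(μ,γ₁) ‖ f(μ,γ₂))`, where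
`c₁ = [γ₁(log(γ₁/γ₂))²/min{1,γ₁}²]·[max{(γ₁+γ₂)/2, 1}²/(√γ₁ − √γ₂)²]`:
the conditional variance of the single-step log-likelihood-ratio increment is at most
`c₁` times its conditional expectation. -/
theorem variance_le_const_mul_kl
    (γ₁ γ₂ : ℝ) (hγ₁ : 0 < γ₁) (hγ₂ : 0 < γ₂) (hne : γ₁ ≠ γ₂)
    (μ : ℝ) (hμ : μ ∈ Set.Ioo (0 : ℝ) 1) :
    γ₁ * (μ * (1 - μ)) * Real.log (γ₁ / γ₂) ^ 2 / (1 + (γ₁ - 1) * μ) ^ 2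
      ≤ (γ₁ * Real.log (γ₁ / γ₂) ^ 2 / min 1 γ₁ ^ 2)
          * (max ((γ₁ + γ₂) / 2) 1 ^ 2 / (Real.sqrt γ₁ - Real.sqrt γ₂) ^ 2)
          * klBernoulli (declProb μ γ₁) (declProb μ γ₂) := by
  have hμ' := Set.Ioo_subset_Icc_self hμ
  have hd₁ := one_add_sub_one_mul_pos hγ₁ hμ'
  have hd₂ := one_add_sub_one_mul_pos hγ₂ hμ'
  have hg : √γ₁ - √γ₂ ≠ 0 := sub_ne_zero.2 fun h => hne ((sqrt_inj hγ₁.le hγ₂.le).1 h)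
  have hA : 0 ≤ γ₁ * (μ * (1 - μ)) * Real.log (γ₁ / γ₂) ^ 2 := by
    have := hμ.1; have := sub_pos.2 hμ.2; positivity
  have hkl := le_klBernoulli_declProb hγ₁ hγ₂ hμ
  calc γ₁ * (μ * (1 - μ)) * Real.log (γ₁ / γ₂) ^ 2 / (1 + (γ₁ - 1) * μ) ^ 2
      ≤ γ₁ * (μ * (1 - μ)) * Real.log (γ₁ / γ₂) ^ 2 * max ((γ₁ + γ₂) / 2) 1 ^ 2
          / (min 1 γ₁ ^ 2 * ((1 + (γ₁ - 1) * μ) * (1 + (γ₂ - 1) * μ))) := by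
        rw [div_le_div_iff₀ (by positivity) (by positivity)]
        have := mul_le_mul_of_nonneg_left (min_one_sq_mul_le_max_sq_mul (γ₂ := γ₂) hγ₁ hμ')
          (mul_nonneg hA hd₁.le)
        linarith
    _ = (γ₁ * log (γ₁ / γ₂) ^ 2 / min 1 γ₁ ^ 2)
          * (max ((γ₁ + γ₂) / 2) 1 ^ 2 / (√γ₁ - √γ₂) ^ 2)
          * (μ * (1 - μ) * (√γ₁ - √γ₂) ^ 2 / ((1 + (γ₁ - 1) * μ) * (1 + (γ₂ - 1) * μ))) := by
        field_simp
    _ ≤ _ := by gcongr
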